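/- Assume D ≠ 0 and let G be a global maximizer of η over 𝕆^{n×k}. Then tr(GᵀD) ≠ 0, GᵀD = DᵀG, and A G − ξ(G) D = G M(G). -/

import Mathlib

/-!
At a maximizer `t = tr(GᵀD)` cannot vanish: `η = t² / tr(GᵀAG)` with `tr(GᵀAG) > 0`, and `η > 0`
at a suitably signed partial permutation matrix.

For skew `W` the curve `s ↦ exp(sW) G` stays in `𝕆^{n×k}`, so `s = 0` is a critical point of `η`
along it; with `A` symmetric this reads `tr(Wᵀ X) = 0` for `X = (AG − ξD)Gᵀ`. As `W` ranges over all
skew matrices, `X` is symmetric. Then `AG − ξD = XG = G · Gᵀ(AG − ξD)`, and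
`Gᵀ(AG − ξD) = GᵀXG = GᵀAG − ξ GᵀD` is symmetric, hence equal to `M(G)`; since `ξ ≠ 0`, `GᵀD`
is symmetric as well.
-/

open Matrix

/-- The objective `η(G) = tr(GᵀD)² / tr(GᵀAG)`. -/
noncomputable def eta {n k : ℕ} (A : Matrix (Fin n) (Fin n) ℝ)
    (D G : Matrix (Fin n) (Fin k) ℝ) : ℝ :=
  (Matrix.trace (Gᵀ * D)) ^ 2 / Matrix.trace (Gᵀ * A * G)

/-- `ξ(G) = tr(GᵀAG) / tr(GᵀD)`. -/
noncomputable def xi {n k : ℕ} (A : Matrix (Fin n) (Fin n) ℝ)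
    (D G : Matrix (Fin n) (Fin k) ℝ) : ℝ :=
  Matrix.trace (Gᵀ * A * G) / Matrix.trace (Gᵀ * D)

/-- `sym(B) = (B + Bᵀ)/2`. -/
noncomputable def symPart {k : ℕ} (B : Matrix (Fin k) (Fin k) ℝ) : Matrix (Fin k) (Fin k) ℝ :=
  (1 / 2 : ℝ) • (B + Bᵀ)

/-- `M(G) = sym(GᵀAG − ξ(G)·GᵀD)`. -/
noncomputable def Mmat {n k : ℕ} (A : Matrix (Fin n) (Fin n) ℝ)
    (D G : Matrix (Fin n) (Fin k) ℝ) : Matrix (Fin k) (Fin k) ℝ :=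
  symPart (Gᵀ * A * G - xi A D G • (Gᵀ * D))

/-- `E(G) = A − ξ(G)·(DGᵀ + GDᵀ)`. -/
noncomputable def Emat {n k : ℕ} (A : Matrix (Fin n) (Fin n) ℝ)
    (D G : Matrix (Fin n) (Fin k) ℝ) : Matrix (Fin n) (Fin n) ℝ :=
  A - xi A D G • (D * Gᵀ + G * Dᵀ)

/-- The Frobenius norm of a real matrix. -/
noncomputable def frobNorm {n k : ℕ} (M : Matrix (Fin n) (Fin k) ℝ) : ℝ :=
  Real.sqrt (∑ i, ∑ j, (M i j) ^ 2)

/-- `G` is a local maximizer of `η` on the Stiefel manifold `𝕆^{n×k}`. -/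
def IsLocalMaxEta {n k : ℕ} (A : Matrix (Fin n) (Fin n) ℝ)
    (D G : Matrix (Fin n) (Fin k) ℝ) : Prop :=
  Gᵀ * G = 1 ∧ ∃ ε > (0 : ℝ), ∀ G' : Matrix (Fin n) (Fin k) ℝ,
    G'ᵀ * G' = 1 → frobNorm (G' - G) < ε → eta A D G' ≤ eta A D G

section Orthonormal

variable {ι κ : Type*} [Fintype ι] [Fintype κ] [DecidableEq κ]

theorem trace_transpose_mul_mul_pos [Nonempty κ] {A : Matrix ι ι ℝ} (hA : A.PosDef)
    {G : Matrix ι κ ℝ} (hG : Gᵀ * G = 1) : 0 < trace (Gᵀ * A * G) := by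
  have hinj : Function.Injective G.mulVec := fun x y h => by
    simpa [mulVec_mulVec, hG] using congrArg (Gᵀ *ᵥ ·) h
  simpa [conjTranspose_eq_transpose_of_trivial] using
    (hA.conjTranspose_mul_mul_same hinj).trace_pos

theorem exists_transpose_mul_self_eq_one_trace_ne_zero [DecidableEq ι]
    (hcard : Fintype.card κ ≤ Fintype.card ι) {D : Matrix ι κ ℝ} (hD : D ≠ 0) :
    ∃ G : Matrix ι κ ℝ, Gᵀ * G = 1 ∧ trace (Gᵀ * D) ≠ 0 := by
  obtain ⟨i₀, j₀, hD₀⟩ : ∃ i j, D i j ≠ 0 := by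
    by_contra! h
    exact hD (ext h)
  obtain ⟨e⟩ := Function.Embedding.nonempty_of_card_le hcard
  let σ : κ ↪ ι := e.trans (Equiv.swap (e j₀) i₀).toEmbedding
  have hσ : σ j₀ = i₀ := by simp [σ]
  let ε : κ → ℝ := fun j => if 0 ≤ D (σ j) j then 1 else -1
  have hεε : ∀ j, ε j * ε j = 1 := fun j => by by_cases h : 0 ≤ D (σ j) j <;> simp [ε, h]
  have hεD : ∀ j, ε j * D (σ j) j = |D (σ j) j| := fun j => by
    by_cases h : 0 ≤ D (σ j) j
    · simp [ε, h, abs_of_nonneg h]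
    · simp [ε, h, abs_of_neg (not_le.mp h)]
  let G : Matrix ι κ ℝ := of fun i j => if σ j = i then ε j else 0
  refine ⟨G, ?_, ?_⟩
  · ext j j'
    by_cases h : j = j' <;> simp [G, Matrix.mul_apply, one_apply, ite_mul, h, hεε]
  · have htrace : trace (Gᵀ * D) = ∑ j, |D (σ j) j| := by
      simp [G, trace, Matrix.mul_apply, ite_mul, hεD]
    rw [htrace]
    refine (Finset.sum_pos' (fun j _ => abs_nonneg _) ⟨j₀, Finset.mem_univ _, ?_⟩).ne'
    simpa [hσ] using hD₀

theorem isSymm_of_trace_transpose_mul_eq_zero {X : Matrix ι ι ℝ}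
    (h : ∀ W : Matrix ι ι ℝ, Wᵀ = -W → trace (Wᵀ * X) = 0) : X.IsSymm := by
  set Y := X - Xᵀ
  have hY : Yᵀ = -Y := by simp [Y]
  have hYX : trace (Yᵀ * X) = 0 := h Y hY
  have hYX' : trace (Y * X) = 0 := by rw [← neg_eq_zero, ← trace_neg, ← Matrix.neg_mul, ← hY, hYX]
  have hYY : trace (Yᵀ * Y) = 0 := by
    calc trace (Yᵀ * Y) = trace (Yᵀ * X) - trace (Yᵀ * Xᵀ) := by rw [Matrix.mul_sub, trace_sub]
      _ = 0 := by rw [trace_transpose_mul, hYX, hYX', sub_zero]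
  rw [← conjTranspose_eq_transpose_of_trivial, trace_conjTranspose_mul_self_eq_zero_iff] at hYY
  exact (sub_eq_zero.mp hYY).symm

theorem isSymm_transpose_mul_of_isSymm_mul_transpose {G F : Matrix ι κ ℝ} (hG : Gᵀ * G = 1)
    (hX : (F * Gᵀ).IsSymm) : (Gᵀ * F).IsSymm := by
  have : Gᵀ * F = Gᵀ * (F * Gᵀ) * G := by
    simp only [Matrix.mul_assoc, hG, Matrix.mul_one]
  rw [this, IsSymm, transpose_mul, transpose_mul, transpose_transpose, hX.eq, Matrix.mul_assoc Gᵀ]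

theorem eq_mul_transpose_mul_of_isSymm_mul_transpose {G F : Matrix ι κ ℝ} (hG : Gᵀ * G = 1)
    (hX : (F * Gᵀ).IsSymm) : F = G * (Gᵀ * F) := by
  calc F = (F * Gᵀ)ᵀ * G := by rw [hX.eq, Matrix.mul_assoc, hG, Matrix.mul_one]
    _ = G * (Gᵀ * F)ᵀ := by rw [transpose_mul, transpose_mul, transpose_transpose, Matrix.mul_assoc]
    _ = G * (Gᵀ * F) := by rw [(isSymm_transpose_mul_of_isSymm_mul_transpose hG hX).eq]

end Orthonormal

section Exponential

variable {ι : Type*} [Fintype ι] [DecidableEq ι]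

-- `NormedSpace.exp` and its derivative need a normed algebra structure on square matrices; the
-- statements below do not depend on which norm is chosen.
attribute [local instance] Matrix.linftyOpNormedRing Matrix.linftyOpNormedAlgebra

theorem transpose_exp_smul_mul_exp_smul {W : Matrix ι ι ℝ} (hW : Wᵀ = -W) (s : ℝ) :
    (NormedSpace.exp (s • W))ᵀ * NormedSpace.exp (s • W) = 1 := by
  rw [← Matrix.exp_transpose, transpose_smul, hW, smul_neg,
    ← Matrix.exp_add_of_commute _ _ ((Commute.refl (s • W)).neg_left), neg_add_cancel,
    NormedSpace.exp_zero]

theorem hasDerivAt_trace_exp_smul_mul (W B : Matrix ι ι ℝ) :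
    HasDerivAt (fun s : ℝ => trace (NormedSpace.exp (s • W) * B)) (trace (W * B)) 0 := by
  have h := (hasDerivAt_exp_smul_const' (𝕂 := ℝ) W 0).mul_const B
  rw [zero_smul, NormedSpace.exp_zero, Matrix.mul_one] at h
  exact (traceLinearMap ι ℝ ℝ).toContinuousLinearMap.hasFDerivAt.comp_hasDerivAt 0 h

theorem hasDerivAt_trace_exp_smul_mul_mul_exp_smul_mul (V W A B : Matrix ι ι ℝ) :
    HasDerivAt (fun s : ℝ => trace (NormedSpace.exp (s • V) * A * NormedSpace.exp (s • W) * B))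
      (trace (V * A * B + A * W * B)) 0 := by
  have h := (((hasDerivAt_exp_smul_const' (𝕂 := ℝ) V 0).mul_const A).mul
    (hasDerivAt_exp_smul_const' (𝕂 := ℝ) W 0)).mul_const B
  simp only [zero_smul, NormedSpace.exp_zero, Matrix.mul_one, Matrix.one_mul, Matrix.add_mul] at h
  exact (traceLinearMap ι ℝ ℝ).toContinuousLinearMap.hasFDerivAt.comp_hasDerivAt 0 h

end Exponential

theorem IsLocalMax.sq_div_deriv_eq {t q : ℝ → ℝ} {a t' q' : ℝ}
    (h : IsLocalMax (fun s => t s ^ 2 / q s) a) (ht : HasDerivAt t t' a) (hq : HasDerivAt q q' a)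
    (hqa : q a ≠ 0) : 2 * t a * t' * q a = t a ^ 2 * q' := by
  have h0 := h.hasDerivAt_eq_zero ((ht.pow 2).div hq hqa)
  rw [div_eq_zero_iff, sub_eq_zero, pow_one] at h0
  exact h0.resolve_right (pow_ne_zero 2 hqa)

section Eta

variable {n k : ℕ} {A : Matrix (Fin n) (Fin n) ℝ} {D G : Matrix (Fin n) (Fin k) ℝ}

theorem trace_transpose_mul_ne_zero_of_isMax [Nonempty (Fin k)] (hkn : k ≤ n) (hA : A.PosDef)
    (hD : D ≠ 0) (hmax : ∀ G' : Matrix (Fin n) (Fin k) ℝ, G'ᵀ * G' = 1 → eta A D G' ≤ eta A D G) :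
    trace (Gᵀ * D) ≠ 0 := by
  intro ht
  obtain ⟨G', hG', ht'⟩ :=
    exists_transpose_mul_self_eq_one_trace_ne_zero (by simpa using hkn) hD
  have hpos : 0 < eta A D G' :=
    div_pos (by positivity) (trace_transpose_mul_mul_pos hA hG')
  have h0 : eta A D G = 0 := by rw [eta, ht, zero_pow two_ne_zero, zero_div]
  exact (hpos.trans_le (hmax G' hG')).ne' h0

attribute [local instance] Matrix.linftyOpNormedRing Matrix.linftyOpNormedAlgebra

theorem trace_transpose_mul_eq_zero_of_isMax (hA : Aᵀ = A) (hG : Gᵀ * G = 1)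
    (hmax : ∀ G' : Matrix (Fin n) (Fin k) ℝ, G'ᵀ * G' = 1 → eta A D G' ≤ eta A D G)
    (ht : trace (Gᵀ * D) ≠ 0) (hq : trace (Gᵀ * A * G) ≠ 0)
    {W : Matrix (Fin n) (Fin n) ℝ} (hW : Wᵀ = -W) :
    trace (Wᵀ * ((A * G - xi A D G • D) * Gᵀ)) = 0 := by
  let E : ℝ → Matrix (Fin n) (Fin n) ℝ := fun s => NormedSpace.exp (s • W)
  have hEt : ∀ s, (E s)ᵀ = NormedSpace.exp (s • Wᵀ) := fun s => by
    rw [← Matrix.exp_transpose, transpose_smul]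
  have hEG : ∀ s, (E s * G)ᵀ * (E s * G) = 1 := fun s => by
    rw [transpose_mul, Matrix.mul_assoc, ← Matrix.mul_assoc (E s)ᵀ,
      transpose_exp_smul_mul_exp_smul hW, Matrix.one_mul, hG]
  have heta : ∀ s, eta A D (E s * G) = trace (NormedSpace.exp (s • Wᵀ) * (D * Gᵀ)) ^ 2 /
      trace (NormedSpace.exp (s • Wᵀ) * A * E s * (G * Gᵀ)) := fun s => by
    rw [eta, transpose_mul, hEt]
    simp only [Matrix.mul_assoc]
    rw [trace_mul_comm Gᵀ, trace_mul_comm Gᵀ]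
    simp only [Matrix.mul_assoc]
  have hT : trace (D * Gᵀ) = trace (Gᵀ * D) := trace_mul_comm _ _
  have hQ : trace (A * (G * Gᵀ)) = trace (Gᵀ * A * G) := by
    rw [← Matrix.mul_assoc, trace_mul_comm, Matrix.mul_assoc]
  have hR : trace (A * W * (G * Gᵀ)) = trace (Wᵀ * A * (G * Gᵀ)) := by
    rw [← trace_transpose]
    simp only [transpose_mul, transpose_transpose, hA]
    rw [trace_mul_comm]
  have hloc : IsLocalMax (fun s => eta A D (E s * G)) 0 :=
    Filter.Eventually.of_forall fun s => by simpa [E] using hmax _ (hEG s)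
  rw [funext heta] at hloc
  have hstat := hloc.sq_div_deriv_eq (hasDerivAt_trace_exp_smul_mul _ _)
    (hasDerivAt_trace_exp_smul_mul_mul_exp_smul_mul _ _ _ _) (by simpa [E, hQ] using hq)
  simp only [zero_smul, NormedSpace.exp_zero, Matrix.one_mul, Matrix.mul_one, E] at hstat
  rw [trace_add, hR, hT, hQ] at hstat
  have hfirst : trace (Wᵀ * (D * Gᵀ)) * trace (Gᵀ * A * G)
      = trace (Gᵀ * D) * trace (Wᵀ * A * (G * Gᵀ)) :=
    mul_left_cancel₀ (mul_ne_zero two_ne_zero ht) (by linear_combination hstat)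
  rw [Matrix.sub_mul, Matrix.smul_mul, Matrix.mul_sub, Matrix.mul_smul, trace_sub, trace_smul,
    Matrix.mul_assoc A, ← Matrix.mul_assoc Wᵀ A, xi, smul_eq_mul, div_mul_eq_mul_div, sub_eq_zero, eq_div_iff ht]
  linear_combination -hfirst

end Eta

theorem symPart_of_isSymm {k : ℕ} {B : Matrix (Fin k) (Fin k) ℝ} (hB : B.IsSymm) :
    symPart B = B := by
  rw [symPart, hB.eq, ← two_smul ℝ B, smul_smul]
  norm_num

/-- if `D ≠ 0` and `G` is a global maximizer of `η` over `𝕆^{n×k}`, then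
`tr(GᵀD) ≠ 0`, `GᵀD = DᵀG`, and `AG − ξ(G)D = G·M(G)`. -/
theorem firstOrder_of_global_max
    (n k : ℕ) (hk1 : 1 ≤ k) (hkn : k < n)
    (A : Matrix (Fin n) (Fin n) ℝ) (hA : A.PosDef)
    (D : Matrix (Fin n) (Fin k) ℝ) (hD : D ≠ 0)
    (G : Matrix (Fin n) (Fin k) ℝ) (hG : Gᵀ * G = 1)
    (hmax : ∀ G' : Matrix (Fin n) (Fin k) ℝ, G'ᵀ * G' = 1 → eta A D G' ≤ eta A D G) :
    Matrix.trace (Gᵀ * D) ≠ 0 ∧ Gᵀ * D = Dᵀ * G ∧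
      A * G - xi A D G • D = G * Mmat A D G := by
  have : Nonempty (Fin k) := Fin.pos_iff_nonempty.mp hk1
  have hAt : Aᵀ = A := (isHermitian_iff_isSymm.mp hA.isHermitian).eq
  have hq := trace_transpose_mul_mul_pos hA hG
  have ht := trace_transpose_mul_ne_zero_of_isMax hkn.le hA hD hmax
  have hX : ((A * G - xi A D G • D) * Gᵀ).IsSymm := isSymm_of_trace_transpose_mul_eq_zero
    fun W hW => trace_transpose_mul_eq_zero_of_isMax hAt hG hmax ht hq.ne' hW
  have hGF : Gᵀ * (A * G - xi A D G • D) = Gᵀ * A * G - xi A D G • (Gᵀ * D) := by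
    rw [Matrix.mul_sub, Matrix.mul_smul, Matrix.mul_assoc]
  have hM : (Gᵀ * A * G - xi A D G • (Gᵀ * D)).IsSymm :=
    hGF ▸ isSymm_transpose_mul_of_isSymm_mul_transpose hG hX
  refine ⟨ht, ?_, ?_⟩
  · have hGAG : (Gᵀ * A * G).IsSymm := by
      rw [IsSymm, transpose_mul, transpose_mul, transpose_transpose, hAt, Matrix.mul_assoc]
    have hξB : xi A D G • (Gᵀ * D)ᵀ = xi A D G • (Gᵀ * D) := by
      simpa using (hGAG.sub hM).eq
    have hB : (Gᵀ * D)ᵀ = Gᵀ * D := smul_right_injective _ (div_ne_zero hq.ne' ht) hξB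
    rw [← hB, transpose_mul, transpose_transpose]
  · rw [Mmat, symPart_of_isSymm hM, ← hGF]
    exact eq_mul_transpose_mul_of_isSymm_mul_transpose hG hX
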